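/- Let 0 < ρ < 1, λ ≥ 0, and suppose w : [0,∞) → ℝ is continuously differentiable, satisfies the Caputo fractional differential equation D_t^ρ w(t) + λ w(t) = 0 for t > 0, and w(0) = 0. Then w(t) = 0 for all t ≥ 0. -/

import Mathlib

open MeasureTheory intervalIntegral Set

lemma measurable_rpow_const' (c : ℝ) : Measurable fun x : ℝ => x ^ c := by
  apply measurable_of_continuousOn_compl_singleton (0:ℝ)
  intro x hx
  exact (Real.continuousAt_rpow_const x c (Or.inl hx)).continuousWithinAt

lemma kker_int {r a b : ℝ} (hr : -1 < r) :
    IntervalIntegrable (fun t => (b - t) ^ r) volume a b := by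
  have h := (intervalIntegrable_rpow' (a := b - b) (b := b - a) hr).comp_sub_left b
  simpa using h.symm

lemma kker_val {r a b : ℝ} (hr : -1 < r) (hab : a ≤ b) :
    ∫ t in a..b, (b - t) ^ r = (b - a) ^ (r + 1) / (r + 1) := by
  have h := intervalIntegral.integral_comp_sub_left (a := a) (b := b) (fun u => u ^ r) b
  rw [h, integral_rpow (Or.inl hr), sub_self, Real.zero_rpow (by linarith)]
  ring

noncomputable def betaAux (ρ : ℝ) : ℝ := ∫ u in (0:ℝ)..1, (1 - u) ^ (ρ - 1) * u ^ (-ρ)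


lemma betaAux_integrable {ρ : ℝ} (hρ0 : 0 < ρ) (hρ1 : ρ < 1) :
    IntervalIntegrable (fun u => (1 - u) ^ (ρ - 1) * u ^ (-ρ)) volume 0 1 := by
  have hmeas : ∀ a b : ℝ, AEStronglyMeasurable (fun u : ℝ => (1 - u) ^ (ρ - 1) * u ^ (-ρ))
      (volume.restrict (Set.uIoc a b)) :=
    fun a b => ((( measurable_rpow_const' (ρ-1)).comp (measurable_const.sub measurable_id)).mul
      (measurable_rpow_const' (-ρ))).aestronglyMeasurable
  have h1 : IntervalIntegrable (fun u => (1 - u) ^ (ρ - 1) * u ^ (-ρ)) volume 0 (1/2) := by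
    rw [intervalIntegrable_iff]
    have hker : IntervalIntegrable (fun u : ℝ => 2 ^ (1 - ρ) * u ^ (-ρ)) volume 0 (1/2) :=
      (intervalIntegrable_rpow' (by linarith)).const_mul _
    rw [intervalIntegrable_iff] at hker
    refine hker.mono' (hmeas 0 (1/2)) ?_
    rw [Set.uIoc_of_le (by norm_num : (0:ℝ) ≤ 1/2)]
    filter_upwards [ae_restrict_mem measurableSet_Ioc] with u hu
    obtain ⟨hu0, hu2⟩ := hu
    have h1u : (1:ℝ)/2 ≤ 1 - u := by linarith
    have hb : (1 - u) ^ (ρ - 1) ≤ (1/2 : ℝ) ^ (ρ - 1) :=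
      Real.rpow_le_rpow_of_nonpos (by norm_num) h1u (by linarith)
    have hhalf : ((1:ℝ)/2) ^ (ρ - 1) = 2 ^ (1 - ρ) := by
      rw [one_div, Real.inv_rpow (by norm_num : (0:ℝ) ≤ 2), ← Real.rpow_neg (by norm_num), neg_sub]
    rw [Real.norm_eq_abs, abs_mul,
      abs_of_nonneg (Real.rpow_nonneg (by linarith) _),
      abs_of_nonneg (Real.rpow_nonneg hu0.le _)]
    exact mul_le_mul_of_nonneg_right (hhalf ▸ hb) (Real.rpow_nonneg hu0.le _)
  have h2 : IntervalIntegrable (fun u => (1 - u) ^ (ρ - 1) * u ^ (-ρ)) volume (1/2) 1 := by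
    rw [intervalIntegrable_iff]
    have hker : IntervalIntegrable (fun u : ℝ => (1 - u) ^ (ρ - 1) * 2 ^ ρ) volume (1/2) 1 := by
      have h := (intervalIntegrable_rpow' (a := (1:ℝ) - 1) (b := 1 - 1/2)
        (by linarith : (-1:ℝ) < ρ - 1)).comp_sub_left 1
      simpa using h.symm.mul_const _
    rw [intervalIntegrable_iff] at hker
    refine hker.mono' (hmeas (1/2) 1) ?_
    rw [Set.uIoc_of_le (by norm_num : (1:ℝ)/2 ≤ 1)]
    filter_upwards [ae_restrict_mem measurableSet_Ioc] with u hu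
    obtain ⟨hu0, hu2⟩ := hu
    have hb : u ^ (-ρ) ≤ ((1:ℝ)/2) ^ (-ρ) :=
      Real.rpow_le_rpow_of_nonpos (by norm_num) hu0.le (by linarith)
    have hhalf : ((1:ℝ)/2) ^ (-ρ) = 2 ^ ρ := by
      rw [one_div, Real.inv_rpow (by norm_num : (0:ℝ) ≤ 2), ← Real.rpow_neg (by norm_num), neg_neg]
    rw [Real.norm_eq_abs, abs_mul,
      abs_of_nonneg (Real.rpow_nonneg (by linarith) _),
      abs_of_nonneg (Real.rpow_nonneg (by linarith : (0:ℝ) ≤ u) _)]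
    exact mul_le_mul_of_nonneg_left (hhalf ▸ hb) (Real.rpow_nonneg (by linarith) _)
  exact h1.trans h2

lemma betaAux_pos {ρ : ℝ} (hρ0 : 0 < ρ) (hρ1 : ρ < 1) : 0 < betaAux ρ := by
  apply intervalIntegral.intervalIntegral_pos_of_pos_on (betaAux_integrable hρ0 hρ1)
  · intro x hx
    exact mul_pos (Real.rpow_pos_of_pos (by linarith [hx.2]) _)
      (Real.rpow_pos_of_pos hx.1 _)
  · norm_num

lemma beta_subst {ρ τ s : ℝ} (h : τ < s) :
    ∫ t in τ..s, (s - t) ^ (ρ - 1) * (t - τ) ^ (-ρ) = betaAux ρ := by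
  have hc : s - τ ≠ 0 := by linarith
  have key := intervalIntegral.integral_comp_mul_add
    (a := (0:ℝ)) (b := 1) (fun t => (s - t) ^ (ρ - 1) * (t - τ) ^ (-ρ)) hc τ
  have h1 : ((s - τ) * 0 + τ) = τ := by ring
  have h2 : ((s - τ) * 1 + τ) = s := by ring
  rw [h1, h2] at key
  have lhs_eq : (∫ u in (0:ℝ)..1, (s - ((s - τ) * u + τ)) ^ (ρ - 1) * ((s - τ) * u + τ - τ) ^ (-ρ))
      = (s - τ)⁻¹ * betaAux ρ := by
    rw [betaAux, ← intervalIntegral.integral_const_mul]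
    apply intervalIntegral.integral_congr
    intro u hu
    rw [Set.uIcc_of_le (by norm_num : (0:ℝ) ≤ 1)] at hu
    obtain ⟨hu0, hu1⟩ := hu
    show (s - ((s - τ) * u + τ)) ^ (ρ - 1) * ((s - τ) * u + τ - τ) ^ (-ρ)
      = (s - τ)⁻¹ * ((1 - u) ^ (ρ - 1) * u ^ (-ρ))
    have e1 : s - ((s - τ) * u + τ) = (s - τ) * (1 - u) := by ring
    have e2 : (s - τ) * u + τ - τ = (s - τ) * u := by ring
    have e3 : (s - τ) ^ (ρ - 1) * (s - τ) ^ (-ρ) = (s - τ)⁻¹ := by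
      rw [← Real.rpow_add (by linarith), show ρ - 1 + -ρ = (-1:ℝ) by ring,
        Real.rpow_neg_one]
    rw [e1, e2, Real.mul_rpow (by linarith) (by linarith),
      Real.mul_rpow (by linarith) hu0,
      show (s - τ) ^ (ρ - 1) * (1 - u) ^ (ρ - 1) * ((s - τ) ^ (-ρ) * u ^ (-ρ))
        = ((s - τ) ^ (ρ - 1) * (s - τ) ^ (-ρ)) * ((1 - u) ^ (ρ - 1) * u ^ (-ρ)) from by ring,
      e3]
  rw [lhs_eq, smul_eq_mul] at key
  exact mul_left_cancel₀ (inv_ne_zero hc) key.symm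

lemma fubini_abel {ρ s : ℝ} (hρ0 : 0 < ρ) (hρ1 : ρ < 1) (hs : 0 < s)
    (w : ℝ → ℝ) (hw : Differentiable ℝ w) (hw' : Continuous (deriv w)) :
    (∫ t in (0:ℝ)..s, (s - t) ^ (ρ - 1) * ∫ τ in (0:ℝ)..t, deriv w τ * (t - τ) ^ (-ρ))
      = betaAux ρ * (w s - w 0) := by
  set T : Set (ℝ × ℝ) := {p | 0 < p.2 ∧ p.2 ≤ p.1 ∧ p.1 ≤ s} with hTdef
  have hT : MeasurableSet T :=
    ((measurableSet_lt measurable_const measurable_snd).inter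
      ((measurableSet_le measurable_snd measurable_fst).inter
        (measurableSet_le measurable_fst measurable_const)))
  set F : ℝ × ℝ → ℝ :=
    T.indicator (fun p => (s - p.1) ^ (ρ - 1) * (deriv w p.2 * (p.1 - p.2) ^ (-ρ))) with hFdef
  have hFmeas : AEStronglyMeasurable F (volume.prod volume) := by
    apply Measurable.aestronglyMeasurable
    apply Measurable.indicator _ hT
    exact (((measurable_rpow_const' (ρ - 1)).comp (measurable_const.sub measurable_fst)).mul
      ((hw'.measurable.comp measurable_snd).mul
        ((measurable_rpow_const' (-ρ)).comp (measurable_fst.sub measurable_snd))))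
  -- slice descriptions
  have claim1 : ∀ t ∈ Ioc (0:ℝ) s, (fun τ => F (t, τ)) =
      (Ioc (0:ℝ) t).indicator (fun τ => (s - t) ^ (ρ - 1) * (deriv w τ * (t - τ) ^ (-ρ))) := by
    intro t ht
    funext τ
    by_cases hτ : τ ∈ Ioc (0:ℝ) t
    · rw [indicator_of_mem hτ, hFdef, indicator_of_mem]
      exact ⟨hτ.1, hτ.2, ht.2⟩
    · rw [indicator_of_notMem hτ, hFdef, indicator_of_notMem]
      intro hmem
      exact hτ ⟨hmem.1, hmem.2.1⟩
  have claim2 : ∀ t : ℝ, t ∉ Ioc (0:ℝ) s → (fun τ => F (t, τ)) = 0 := by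
    intro t ht
    funext τ
    rw [hFdef, indicator_of_notMem, Pi.zero_apply]
    intro hmem
    exact ht ⟨lt_of_lt_of_le hmem.1 hmem.2.1, hmem.2.2⟩
  have claim3 : ∀ τ : ℝ, 0 < τ → (fun t => F (t, τ)) =
      (Icc τ s).indicator (fun t => (s - t) ^ (ρ - 1) * (deriv w τ * (t - τ) ^ (-ρ))) := by
    intro τ hτ
    funext t
    by_cases ht : t ∈ Icc τ s
    · rw [indicator_of_mem ht, hFdef, indicator_of_mem]
      exact ⟨hτ, ht.1, ht.2⟩
    · rw [indicator_of_notMem ht, hFdef, indicator_of_notMem]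
      intro hmem
      exact ht ⟨hmem.2.1, hmem.2.2⟩
  have claim4 : ∀ τ : ℝ, τ ≤ 0 → (fun t => F (t, τ)) = 0 := by
    intro τ hτ
    funext t
    rw [hFdef, indicator_of_notMem, Pi.zero_apply]
    intro hmem
    exact absurd hmem.1 (not_lt.mpr hτ)
  -- integrability of slices
  have hslice_int : ∀ t ∈ Ioc (0:ℝ) s,
      IntervalIntegrable (fun τ => deriv w τ * (t - τ) ^ (-ρ)) volume 0 t := by
    intro t ht
    exact (kker_int (by linarith)).continuousOn_mul hw'.continuousOn
  -- bound for deriv w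
  obtain ⟨C, hC⟩ := (isCompact_Icc (a := (0:ℝ)) (b := s)).exists_bound_of_continuousOn
    hw'.continuousOn
  have hC0 : 0 ≤ C := le_trans (norm_nonneg _) (hC 0 ⟨le_refl 0, hs.le⟩)
  -- part (a)
  have parta : ∀ᵐ t : ℝ, Integrable (fun τ => F (t, τ)) volume := by
    filter_upwards with t
    by_cases ht : t ∈ Ioc (0:ℝ) s
    · rw [claim1 t ht]
      rw [integrable_indicator_iff measurableSet_Ioc]
      exact (intervalIntegrable_iff_integrableOn_Ioc_of_le ht.1.le).1
        (((hslice_int t ht)).const_mul _)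
    · rw [claim2 t ht]
      exact integrable_zero _ _ _
  -- part (b)
  have hDnn : 0 ≤ C * s ^ (1 - ρ) / (1 - ρ) := by
    apply div_nonneg (mul_nonneg hC0 (Real.rpow_nonneg hs.le _)) (by linarith)
  have partb : Integrable (fun t => ∫ τ, ‖F (t, τ)‖) volume := by
    have hg : Integrable ((Ioc (0:ℝ) s).indicator
        (fun t => (s - t) ^ (ρ - 1) * (C * s ^ (1 - ρ) / (1 - ρ)))) volume := by
      rw [integrable_indicator_iff measurableSet_Ioc]
      exact (intervalIntegrable_iff_integrableOn_Ioc_of_le hs.le).1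
        ((kker_int (by linarith)).mul_const _)
    apply Integrable.mono' hg (hFmeas.norm.integral_prod_right')
    filter_upwards with t
    by_cases ht : t ∈ Ioc (0:ℝ) s
    · rw [indicator_of_mem ht]
      refine le_trans (norm_integral_le_integral_norm _) ?_
      simp only [norm_norm]
      have hfn : (fun τ : ℝ => ‖F (t, τ)‖) = fun τ => ‖(Ioc (0:ℝ) t).indicator
          (fun τ => (s - t) ^ (ρ - 1) * (deriv w τ * (t - τ) ^ (-ρ))) τ‖ :=
        funext fun τ => by rw [congrFun (claim1 t ht) τ]
      rw [hfn]
      calc ∫ τ, ‖(Ioc (0:ℝ) t).indicator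
            (fun τ => (s - t) ^ (ρ - 1) * (deriv w τ * (t - τ) ^ (-ρ))) τ‖
          = ∫ τ in Ioc (0:ℝ) t, ‖(s - t) ^ (ρ - 1) * (deriv w τ * (t - τ) ^ (-ρ))‖ := by
            simp only [norm_indicator_eq_indicator_norm]
            rw [MeasureTheory.integral_indicator measurableSet_Ioc]
        _ = ∫ τ in (0:ℝ)..t, ‖(s - t) ^ (ρ - 1) * (deriv w τ * (t - τ) ^ (-ρ))‖ := by
            rw [intervalIntegral.integral_of_le ht.1.le]
        _ ≤ ∫ τ in (0:ℝ)..t, (s - t) ^ (ρ - 1) * (C * (t - τ) ^ (-ρ)) := by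
            apply intervalIntegral.integral_mono_on ht.1.le
            · exact (((hslice_int t ht)).const_mul _).norm
            · exact ((kker_int (by linarith)).const_mul _).const_mul _
            · intro τ hτ
              have h1 : (0:ℝ) ≤ (s - t) ^ (ρ - 1) := Real.rpow_nonneg (by linarith [ht.2]) _
              have h2 : (0:ℝ) ≤ (t - τ) ^ (-ρ) := Real.rpow_nonneg (by linarith [hτ.2]) _
              simp only [norm_mul, Real.norm_eq_abs]
              rw [abs_of_nonneg h1, abs_of_nonneg h2]
              apply mul_le_mul_of_nonneg_left _ h1
              apply mul_le_mul_of_nonneg_right _ h2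
              exact (Real.norm_eq_abs _) ▸ hC τ ⟨hτ.1, le_trans hτ.2 ht.2⟩
        _ = (s - t) ^ (ρ - 1) * (C * (t ^ (1 - ρ) / (1 - ρ))) := by
            rw [intervalIntegral.integral_const_mul, intervalIntegral.integral_const_mul,
              kker_val (by linarith) ht.1.le, sub_zero, show -ρ + 1 = 1 - ρ by ring]
        _ ≤ (s - t) ^ (ρ - 1) * (C * s ^ (1 - ρ) / (1 - ρ)) := by
            apply mul_le_mul_of_nonneg_left _ (Real.rpow_nonneg (by linarith [ht.2]) _)
            rw [mul_div_assoc]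
            apply mul_le_mul_of_nonneg_left _ hC0
            apply div_le_div_of_nonneg_right ?_ (by linarith)
            exact Real.rpow_le_rpow ht.1.le ht.2 (by linarith)

    · rw [indicator_of_notMem ht]
      have hfn : (fun τ : ℝ => ‖F (t, τ)‖) = fun _ => (0:ℝ) :=
        funext fun τ => by rw [congrFun (claim2 t ht) τ]; simp
      rw [hfn]
      simp
  have hFint : Integrable F (volume.prod volume) :=
    (integrable_prod_iff hFmeas).2 ⟨parta, partb⟩
  -- swap
  have swap := MeasureTheory.integral_integral_swap
    (f := fun t τ => F (t, τ)) hFint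
  -- identify LHS
  have lhs_id : (∫ t, ∫ τ, F (t, τ)) =
      ∫ t in (0:ℝ)..s, (s - t) ^ (ρ - 1) * ∫ τ in (0:ℝ)..t, deriv w τ * (t - τ) ^ (-ρ) := by
    rw [show (fun t => ∫ τ, F (t, τ)) = (Ioc (0:ℝ) s).indicator
        (fun t => (s - t) ^ (ρ - 1) * ∫ τ in (0:ℝ)..t, deriv w τ * (t - τ) ^ (-ρ)) from ?_]
    · rw [MeasureTheory.integral_indicator measurableSet_Ioc, ← intervalIntegral.integral_of_le hs.le]
    · funext t
      by_cases ht : t ∈ Ioc (0:ℝ) s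
      · rw [indicator_of_mem ht, claim1 t ht, MeasureTheory.integral_indicator measurableSet_Ioc,
          ← intervalIntegral.integral_of_le ht.1.le,
          intervalIntegral.integral_const_mul]
      · rw [indicator_of_notMem ht, claim2 t ht]
        simp
  -- identify RHS
  have rhs_id : (∫ τ, ∫ t, F (t, τ)) = betaAux ρ * (w s - w 0) := by
    rw [show (fun τ => ∫ t, F (t, τ)) = (Ioo (0:ℝ) s).indicator
        (fun τ => deriv w τ * betaAux ρ) from ?_]
    · rw [MeasureTheory.integral_indicator measurableSet_Ioo, ← integral_Ioc_eq_integral_Ioo,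
        ← intervalIntegral.integral_of_le hs.le, intervalIntegral.integral_mul_const,
        intervalIntegral.integral_deriv_eq_sub (fun x _ => hw x)
          (hw'.intervalIntegrable 0 s)]
      ring
    · funext τ
      by_cases hτ0 : 0 < τ
      · rw [claim3 τ hτ0]
        rw [MeasureTheory.integral_indicator measurableSet_Icc, integral_Icc_eq_integral_Ioc]
        by_cases hτs : τ < s
        · rw [indicator_of_mem (show τ ∈ Ioo (0:ℝ) s from ⟨hτ0, hτs⟩),
            ← intervalIntegral.integral_of_le hτs.le]
          rw [show (fun t => (s - t) ^ (ρ - 1) * (deriv w τ * (t - τ) ^ (-ρ)))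
              = (fun t => deriv w τ * ((s - t) ^ (ρ - 1) * (t - τ) ^ (-ρ))) from
            funext fun t => by ring]
          rw [intervalIntegral.integral_const_mul, beta_subst hτs]
        · rw [indicator_of_notMem (fun hmem => hτs hmem.2), Ioc_eq_empty (by linarith)]
          simp
      · rw [claim4 τ (not_lt.mp hτ0),
          indicator_of_notMem (fun hmem => hτ0 hmem.1)]
        simp
  rw [← lhs_id, swap, rhs_id]

lemma cont_ker {v r : ℝ} {A : Set ℝ} (h : ∀ t ∈ A, t < v) :
    ContinuousOn (fun t => (v - t) ^ r) A := by
  intro t ht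
  apply ContinuousAt.continuousWithinAt
  exact ((Real.continuousAt_rpow_const _ _ (Or.inl (by have := h t ht; intro hc; linarith [sub_eq_zero.mp hc]))).comp
    ((continuous_const.sub continuous_id).continuousAt))

/-- The Caputo fractional derivative of order `ρ ∈ (0,1)`. -/
noncomputable def caputoDeriv (ρ : ℝ) (w : ℝ → ℝ) (t : ℝ) : ℝ :=
  (Real.Gamma (1 - ρ))⁻¹ * ∫ τ in (0:ℝ)..t, deriv w τ / (t - τ) ^ ρ

/-- Uniqueness for the scalar Caputo Cauchy problem: if `D^ρ w + λ w = 0` for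
`t > 0` with `w(0) = 0`, then `w ≡ 0` on `[0,∞)`. -/
theorem caputo_cauchy_uniqueness (ρ lam : ℝ) (hρ0 : 0 < ρ) (hρ1 : ρ < 1)
    (hlam : 0 ≤ lam) (w : ℝ → ℝ)
    (hw : Differentiable ℝ w) (hw' : Continuous (deriv w))
    (heq : ∀ t : ℝ, 0 < t → caputoDeriv ρ w t + lam * w t = 0)
    (h0 : w 0 = 0) :
    ∀ t : ℝ, 0 ≤ t → w t = 0 := by
  have hΓ : 0 < Real.Gamma (1 - ρ) := Real.Gamma_pos_of_pos (by linarith)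
  have hB : 0 < betaAux ρ := betaAux_pos hρ0 hρ1
  set K : ℝ := lam * Real.Gamma (1 - ρ) with hKdef
  have hK0 : 0 ≤ K := mul_nonneg hlam hΓ.le
  -- Step A
  have stepA : ∀ t : ℝ, 0 < t →
      (∫ τ in (0:ℝ)..t, deriv w τ * (t - τ) ^ (-ρ)) = -(K * w t) := by
    intro t ht
    have hι : (∫ τ in (0:ℝ)..t, deriv w τ / (t - τ) ^ ρ)
        = ∫ τ in (0:ℝ)..t, deriv w τ * (t - τ) ^ (-ρ) := by
      apply intervalIntegral.integral_congr
      intro τ hτ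
      rw [Set.uIcc_of_le ht.le] at hτ
      show deriv w τ / (t - τ) ^ ρ = deriv w τ * (t - τ) ^ (-ρ)
      rw [Real.rpow_neg (by linarith [hτ.2]), div_eq_mul_inv]
    have h := heq t ht
    rw [caputoDeriv, hι] at h
    have h2 : (Real.Gamma (1 - ρ))⁻¹ * (∫ τ in (0:ℝ)..t, deriv w τ * (t - τ) ^ (-ρ))
        = -(lam * w t) := by linarith
    have h3 := congrArg (fun x => Real.Gamma (1 - ρ) * x) h2
    rw [← mul_assoc, mul_inv_cancel₀ (ne_of_gt hΓ), one_mul] at h3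
    rw [h3, hKdef]
    ring
  -- Step B : Volterra equation
  have stepB : ∀ s : ℝ, 0 < s →
      betaAux ρ * w s = -K * ∫ t in (0:ℝ)..s, (s - t) ^ (ρ - 1) * w t := by
    intro s hs
    have hfub := fubini_abel hρ0 hρ1 hs w hw hw'
    rw [h0, sub_zero] at hfub
    rw [← hfub]
    have : (∫ t in (0:ℝ)..s, (s - t) ^ (ρ - 1) * ∫ τ in (0:ℝ)..t, deriv w τ * (t - τ) ^ (-ρ))
        = ∫ t in (0:ℝ)..s, -K * ((s - t) ^ (ρ - 1) * w t) := by
      apply intervalIntegral.integral_congr_ae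
      filter_upwards with t htmem
      rw [Set.uIoc_of_le hs.le] at htmem
      rw [stepA t htmem.1]
      ring
    rw [this, intervalIntegral.integral_const_mul]
  -- constant and step size
  set q : ℝ := K / betaAux ρ with hqdef
  have hq0 : 0 ≤ q := div_nonneg hK0 hB.le
  set δ : ℝ := (ρ / (2 * (q + 1))) ^ (ρ⁻¹) with hδdef
  have hδpos : 0 < δ := Real.rpow_pos_of_pos (by positivity) _
  have hδρ : δ ^ ρ = ρ / (2 * (q + 1)) :=
    Real.rpow_inv_rpow (by positivity) (ne_of_gt hρ0)
  have hkey : q * (δ ^ ρ / ρ) ≤ 1 / 2 := by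
    have h1 : q * (ρ / (2 * (q + 1)) / ρ) = q / (2 * (q + 1)) := by
      field_simp
    rw [hδρ, h1, div_le_iff₀ (by positivity)]
    linarith
  -- Volterra in divided form
  have stepB' : ∀ s : ℝ, 0 < s →
      w s = -q * ∫ t in (0:ℝ)..s, (s - t) ^ (ρ - 1) * w t := by
    intro s hs
    have h := stepB s hs
    have hBne : betaAux ρ ≠ 0 := ne_of_gt hB
    rw [hqdef, show -(K / betaAux ρ) * (∫ t in (0:ℝ)..s, (s - t) ^ (ρ - 1) * w t)
      = (-K * ∫ t in (0:ℝ)..s, (s - t) ^ (ρ - 1) * w t) / betaAux ρ from by ring,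
      eq_div_iff hBne, mul_comm (w s)]
    exact h
  -- main induction
  have main : ∀ n : ℕ, ∀ u : ℝ, 0 ≤ u → u ≤ n * δ → w u = 0 := by
    intro n
    induction n with
    | zero =>
      intro u hu0 hun
      simp at hun
      have : u = 0 := le_antisymm (by linarith [hun]) hu0
      rw [this, h0]
    | succ n ih =>
      intro u hu0 hun
      by_cases hcase : u ≤ n * δ
      · exact ih u hu0 hcase
      push_neg at hcase
      set a : ℝ := n * δ with hadef
      have ha0 : 0 ≤ a := by positivity
      have hab : a ≤ a + δ := by linarith
      have hub : u ≤ a + δ := by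
        have : ((n:ℝ) + 1) * δ = a + δ := by ring
        rw [hadef]
        push_cast at hun
        linarith [hun]
      obtain ⟨tm, htm_mem, htm_max⟩ := isCompact_Icc.exists_isMaxOn
        (Set.nonempty_Icc.2 hab)
        ((continuous_abs.comp hw.continuous).continuousOn :
          ContinuousOn (fun x => |w x|) (Icc a (a + δ)))
      set M : ℝ := |w tm| with hMdef
      have hM0 : 0 ≤ M := abs_nonneg _
      have hMbound : ∀ x ∈ Icc a (a + δ), |w x| ≤ M := fun x hx => htm_max hx
      -- the key estimate
      have est : ∀ v : ℝ, a < v → v ≤ a + δ → |w v| ≤ M / 2 := by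
        intro v hav hvb
        have hv0 : 0 < v := lt_of_le_of_lt ha0 hav
        have hint1 : IntervalIntegrable (fun t => (v - t) ^ (ρ - 1) * w t) volume 0 a := by
          apply ContinuousOn.intervalIntegrable
          apply ContinuousOn.mul _ hw.continuous.continuousOn
          apply cont_ker
          intro t ht
          rw [Set.uIcc_of_le ha0] at ht
          exact lt_of_le_of_lt ht.2 hav
        have hint2 : IntervalIntegrable (fun t => (v - t) ^ (ρ - 1) * w t) volume a v :=
          (kker_int (by linarith)).mul_continuousOn hw.continuous.continuousOn
        have hsplit := intervalIntegral.integral_add_adjacent_intervals hint1 hint2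
        have hzero1 : (∫ t in (0:ℝ)..a, (v - t) ^ (ρ - 1) * w t) = 0 := by
          have hcongr : (∫ t in (0:ℝ)..a, (v - t) ^ (ρ - 1) * w t)
              = ∫ t in (0:ℝ)..a, (0:ℝ) := by
            apply intervalIntegral.integral_congr
            intro t ht
            rw [Set.uIcc_of_le ha0] at ht
            show (v - t) ^ (ρ - 1) * w t = 0
            rw [ih t ht.1 ht.2, mul_zero]
          rw [hcongr]
          simp
        have habs : |∫ t in a..v, (v - t) ^ (ρ - 1) * w t| ≤ M * ((v - a) ^ ρ / ρ) := by
          refine le_trans (intervalIntegral.abs_integral_le_integral_abs hav.le) ?_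
          have hmono : (∫ t in a..v, |(v - t) ^ (ρ - 1) * w t|)
              ≤ ∫ t in a..v, (v - t) ^ (ρ - 1) * M := by
            apply intervalIntegral.integral_mono_on hav.le hint2.abs
              ((kker_int (by linarith)).mul_const _)
            intro t ht
            have hk : (0:ℝ) ≤ (v - t) ^ (ρ - 1) := Real.rpow_nonneg (by linarith [ht.2]) _
            rw [abs_mul, abs_of_nonneg hk]
            apply mul_le_mul_of_nonneg_left _ hk
            exact hMbound t ⟨ht.1, le_trans ht.2 hvb⟩
          refine hmono.trans ?_
          rw [intervalIntegral.integral_mul_const, kker_val (by linarith) hav.le,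
            show ρ - 1 + 1 = ρ by ring]
          ring_nf
          exact le_refl _
        have hwv := stepB' v hv0
        rw [← hsplit, hzero1, zero_add] at hwv
        rw [hwv, abs_mul, abs_neg, abs_of_nonneg hq0]
        calc q * |∫ t in a..v, (v - t) ^ (ρ - 1) * w t|
            ≤ q * (M * ((v - a) ^ ρ / ρ)) := mul_le_mul_of_nonneg_left habs hq0
          _ ≤ q * (M * (δ ^ ρ / ρ)) := by
              apply mul_le_mul_of_nonneg_left _ hq0
              apply mul_le_mul_of_nonneg_left _ hM0
              apply div_le_div_of_nonneg_right ?_ hρ0.le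
              exact Real.rpow_le_rpow (by linarith) (by linarith) hρ0.le
          _ = (q * (δ ^ ρ / ρ)) * M := by ring
          _ ≤ (1 / 2) * M := mul_le_mul_of_nonneg_right hkey hM0
          _ = M / 2 := by ring
      -- conclude M = 0
      have hMzero : M = 0 := by
        by_cases h : a < tm
        · have := est tm h htm_mem.2
          rw [← hMdef] at this
          linarith
        · have htma : tm = a := le_antisymm (not_lt.mp h) htm_mem.1
          rw [hMdef, htma, ih a ha0 (le_refl a), abs_zero]
      have := est u hcase hub
      rw [hMzero] at this
      have := abs_nonneg (w u)
      exact abs_eq_zero.mp (le_antisymm (by linarith) (by linarith))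
  intro t ht
  obtain ⟨n, hn⟩ := exists_nat_ge (t / δ)
  exact main n t ht ((div_le_iff₀ hδpos).1 hn)
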